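/- If φ and φ' both avoid Ω₁, then the Lie algebras Der(F_φ) and Der(F_{φ'}) of derivations are isomorphic as complex Lie algebras. -/

import Mathlib

open scoped BigOperators

noncomputable section

/-- The underlying space ℂ^{2p} of the Lie algebra `F_φ`. -/
abbrev V (p : ℕ) : Type := Fin (2*p) → ℂ

/-- The space of bilinear maps ℂ^{2p} × ℂ^{2p} → ℂ^{2p}. -/
abbrev Bil (p : ℕ) : Type := V p →ₗ[ℂ] V p →ₗ[ℂ] V p

/-- The basis vector `X j` (1-indexed, j = 1, …, 2p). -/
def X (p j : ℕ) : V p := fun i => if (i : ℕ) + 1 = j then 1 else 0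

/-- The coordinate functional dual to `X j` (1-indexed). -/
def coordL (p j : ℕ) : V p →ₗ[ℂ] ℂ :=
  if h : j - 1 < 2*p then LinearMap.proj (⟨j - 1, h⟩ : Fin (2*p)) else 0

/-- The elementary alternating bilinear map `(x,y) ↦ (x_a y_b − x_b y_a) • v`
(indices 1-based). -/
def elem (p a b : ℕ) (v : V p) : Bil p :=
  (coordL p a).smulRight ((coordL p b).smulRight v)
    - (coordL p b).smulRight ((coordL p a).smulRight v)

/-- The Lie bracket of the frobeniusian model algebra `F_φ`:
`[X_1,X_2] = −X_1`, `[X_{2k+1},X_{2k+2}] = −X_1`, `[X_2,X_{2k+1}] = −φ_k X_{2k+1}`,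
`[X_2,X_{2k+2}] = (1+φ_k) X_{2k+2}` for `1 ≤ k ≤ p−1`. -/
def mu (p : ℕ) (φ : ℕ → ℂ) : Bil p :=
  elem p 1 2 (-(X p 1)) +
    ∑ k ∈ Finset.Icc 1 (p-1),
      (elem p (2*k+1) (2*k+2) (-(X p 1)) + elem p 2 (2*k+1) (-(φ k) • X p (2*k+1))
        + elem p 2 (2*k+2) ((1 + φ k) • X p (2*k+2)))

/-- `φ` avoids the set `Ω₁`. -/
def AvoidsOmega1 (p : ℕ) (φ : ℕ → ℂ) : Prop :=
  ∀ i j : ℕ, 1 ≤ i → i ≤ p - 1 → 1 ≤ j → j ≤ p - 1 →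
    1 + φ i + φ j ≠ 0 ∧ 2 + φ i + φ j ≠ 0 ∧ (i ≠ j → φ i ≠ φ j) ∧
      φ i ≠ 0 ∧ φ i ≠ -1 ∧ 2 * φ i + 1 ≠ 0

/-- `φ` avoids the set `Ω = Ω₁ ∪ Ω₂`. -/
def AvoidsOmega (p : ℕ) (φ : ℕ → ℂ) : Prop :=
  AvoidsOmega1 p φ ∧
    ∀ i j : ℕ, 1 ≤ i → i ≤ p - 1 → 1 ≤ j → j ≤ p - 1 →
      (i ≠ j → 1 + φ i - φ j ≠ 0) ∧ φ i + φ j ≠ 0 ∧ 2 + φ i ≠ 0 ∧ 1 - φ i ≠ 0 ∧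
        1 + 2*φ i - φ j ≠ 0 ∧ 1 + 2*φ i + φ j ≠ 0 ∧ 2*φ i - φ j ≠ 0 ∧ 2 + 2*φ i + φ j ≠ 0

/-- The space of derivations of a bilinear bracket `B` on `ℂ^{2p}`. -/
def derSub (p : ℕ) (B : Bil p) : Submodule ℂ (V p →ₗ[ℂ] V p) where
  carrier := {D | ∀ x y, D (B x y) = B (D x) y + B x (D y)}
  add_mem' := by
    intro D E hD hE x y
    simp only [LinearMap.add_apply, hD x y, hE x y, map_add, LinearMap.add_apply]
    abel
  zero_mem' := by intro x y; simp
  smul_mem' := by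
    intro c D hD x y
    simp only [LinearMap.smul_apply, hD x y, map_smul, LinearMap.map_smul₂,
      LinearMap.smul_apply, smul_add]

/-- The grading subspaces: `g_0 = ℂ X_2`, `g_1 = ⟨X_3,…,X_{2p}⟩`, `g_2 = ℂ X_1`,
and `g_m = 0` otherwise. -/
def gr (p : ℕ) : ℤ → Submodule ℂ (V p) := fun m =>
  if m = 0 then Submodule.span ℂ {X p 2}
  else if m = 1 then Submodule.span ℂ {v | ∃ j, 3 ≤ j ∧ j ≤ 2*p ∧ v = X p j}
  else if m = 2 then Submodule.span ℂ {X p 1}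
  else ⊥

/-- The space of 2-cocycles of `F_φ` with coefficients in the adjoint module
(2-cochains are alternating bilinear maps). -/
def Z2 (p : ℕ) (φ : ℕ → ℂ) : Submodule ℂ (Bil p) where
  carrier := {ψ | (∀ x, ψ x x = 0) ∧
    ∀ x y z, mu p φ x (ψ y z) - mu p φ y (ψ x z) + mu p φ z (ψ x y)
      - ψ (mu p φ x y) z + ψ (mu p φ x z) y - ψ (mu p φ y z) x = 0}
  add_mem' := by
    rintro ψ₁ ψ₂ ⟨h₁a, h₁c⟩ ⟨h₂a, h₂c⟩
    constructor
    · intro x; simp [h₁a x, h₂a x]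
    · intro x y z
      have e₁ := h₁c x y z
      have e₂ := h₂c x y z
      simp only [LinearMap.add_apply, map_add]
      rw [← sub_eq_zero] at *
      simp only [sub_zero] at *
      linear_combination (norm := module) e₁ + e₂
  zero_mem' := by
    constructor
    · intro x; simp
    · intro x y z; simp
  smul_mem' := by
    rintro c ψ ⟨ha, hc⟩
    constructor
    · intro x; simp [ha x]
    · intro x y z
      have e := hc x y z
      simp only [LinearMap.smul_apply, map_smul]
      linear_combination (norm := module) c • e

/-- The space of 2-coboundaries of `F_φ` with coefficients in the adjoint module. -/
def B2 (p : ℕ) (φ : ℕ → ℂ) : Submodule ℂ (Bil p) where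
  carrier := {ψ | ∃ f : V p →ₗ[ℂ] V p,
    ∀ x y, ψ x y = mu p φ x (f y) - mu p φ y (f x) - f (mu p φ x y)}
  add_mem' := by
    rintro ψ₁ ψ₂ ⟨f₁, h₁⟩ ⟨f₂, h₂⟩
    refine ⟨f₁ + f₂, fun x y => ?_⟩
    simp only [LinearMap.add_apply, h₁ x y, h₂ x y, map_add]
    abel
  zero_mem' := ⟨0, by intro x y; simp⟩
  smul_mem' := by
    rintro c ψ ⟨f, h⟩
    refine ⟨c • f, fun x y => ?_⟩
    simp only [LinearMap.smul_apply, h x y, map_smul, smul_sub]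

/-- The 2-cochains of degree `k` with respect to the grading `gr`. -/
def degSub (p : ℕ) (k : ℤ) : Submodule ℂ (Bil p) where
  carrier := {ψ | ∀ (a b : ℤ), ∀ x ∈ gr p a, ∀ y ∈ gr p b, ψ x y ∈ gr p (a + b + k)}
  add_mem' := by
    intro ψ₁ ψ₂ h₁ h₂ a b x hx y hy
    simpa using Submodule.add_mem _ (h₁ a b x hx y hy) (h₂ a b x hx y hy)
  zero_mem' := by intro a b x hx y hy; simp
  smul_mem' := by
    intro c ψ h a b x hx y hy
    simpa using Submodule.smul_mem _ c (h a b x hx y hy)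

attribute [local instance 100] LieRing.ofAssociativeRing

/-- The derivations of `F_φ` as a Lie subalgebra of `End(ℂ^{2p})`. -/
def derLie (p : ℕ) (φ : ℕ → ℂ) : LieSubalgebra ℂ (Module.End ℂ (V p)) :=
  { derSub p (mu p φ) with
    lie_mem' := by
      intro D E hD hE
      have hD' : ∀ x y, D (mu p φ x y) = mu p φ (D x) y + mu p φ x (D y) := hD
      have hE' : ∀ x y, E (mu p φ x y) = mu p φ (E x) y + mu p φ x (E y) := hE
      intro x y
      simp only [Ring.lie_def, LinearMap.sub_apply, Module.End.mul_apply]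
      rw [hE' x y, hD' x y, map_add, map_add, hD' (E x) y, hD' x (E y),
        hE' (D x) y, hE' x (D y)]
      simp only [map_sub, LinearMap.sub_apply]
      abel }

/-- The derivation `f_i` of `F_φ` : `f_i(X_{2i+1}) = X_{2i+1}`, `f_i(X_{2i+2}) = −X_{2i+2}`. -/
def fDer (p i : ℕ) : V p →ₗ[ℂ] V p :=
  (coordL p (2*i+1)).smulRight (X p (2*i+1)) - (coordL p (2*i+2)).smulRight (X p (2*i+2))

/-- The 2-cocycle `ψ_k = ψ^{2k+1}_{2,2k+1}` :
`(X_2,X_{2k+1}) ↦ X_{2k+1}`, `(X_2,X_{2k+2}) ↦ −X_{2k+2}`. -/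
def psiK (p k : ℕ) : Bil p :=
  elem p 2 (2*k+1) (X p (2*k+1)) - elem p 2 (2*k+2) (X p (2*k+2))

/-- The 2-cocycle `ψ^2_{12}` spanning `Z²_{−2}`. -/
def psiM2 (p : ℕ) (φ : ℕ → ℂ) : Bil p :=
  elem p 1 2 (X p 2) +
    ∑ k ∈ Finset.Icc 1 (p-1),
      (elem p (2*k+1) (2*k+2) (X p 2) + elem p 1 (2*k+1) (-(φ k) • X p (2*k+1))
        + elem p 1 (2*k+2) ((1 + φ k) • X p (2*k+2)))

/-- The 2-cocycle `ψ^1_{2,j}` : `(X_2,X_j) ↦ X_1`. -/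
def psiTop (p j : ℕ) : Bil p := elem p 2 j (X p 1)


/-! ### Plain-function versions of the relevant spaces.
We realise spaces of (multi)linear maps as submodules of plain function spaces,
the (bi)linearity being part of the defining conditions. -/

/-- `ψ : ℂ^{2p} × ℂ^{2p} → ℂ^{2p}` is bilinear. -/
def IsBil (p : ℕ) (ψ : V p → V p → V p) : Prop :=
  (∀ x x' y, ψ (x + x') y = ψ x y + ψ x' y) ∧
  (∀ (c : ℂ) (x y), ψ (c • x) y = c • ψ x y) ∧
  (∀ x y y', ψ x (y + y') = ψ x y + ψ x y') ∧
  (∀ (c : ℂ) (x y), ψ x (c • y) = c • ψ x y)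

/-- The space of derivations of a bilinear bracket `B` on `ℂ^{2p}`, realised inside
the space of all maps `ℂ^{2p} → ℂ^{2p}` (linearity is part of the conditions). -/
def derF (p : ℕ) (B : Bil p) : Submodule ℂ (V p → V p) where
  carrier := {D | (∀ x y, D (x + y) = D x + D y) ∧ (∀ (c : ℂ) (x), D (c • x) = c • D x) ∧
    ∀ x y, D (B x y) = B (D x) y + B x (D y)}
  add_mem' := by
    rintro D E ⟨hDa, hDs, hDd⟩ ⟨hEa, hEs, hEd⟩
    refine ⟨fun x y => ?_, fun c x => ?_, fun x y => ?_⟩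
    · simp only [Pi.add_apply, hDa, hEa]; abel
    · simp only [Pi.add_apply, hDs, hEs, smul_add]
    · simp only [Pi.add_apply, hDd x y, hEd x y, map_add, LinearMap.add_apply]; abel
  zero_mem' := by
    refine ⟨fun x y => ?_, fun c x => ?_, fun x y => ?_⟩ <;> simp
  smul_mem' := by
    rintro c D ⟨hDa, hDs, hDd⟩
    refine ⟨fun x y => ?_, fun c' x => ?_, fun x y => ?_⟩
    · simp only [Pi.smul_apply, hDa, smul_add]
    · simp only [Pi.smul_apply, hDs, smul_comm c c']
    · simp only [Pi.smul_apply, hDd x y, map_smul, LinearMap.smul_apply, smul_add]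

/-- The space of inner derivations `ad(v) = B(v,·)` of a bilinear bracket `B`. -/
def innerF (p : ℕ) (B : Bil p) : Submodule ℂ (V p → V p) where
  carrier := {D | ∃ v, D = fun y => B v y}
  add_mem' := by
    rintro D E ⟨v, rfl⟩ ⟨w, rfl⟩
    exact ⟨v + w, by funext y; simp [map_add]⟩
  zero_mem' := ⟨0, by funext y; simp⟩
  smul_mem' := by
    rintro c D ⟨v, rfl⟩
    exact ⟨c • v, by funext y; simp [map_smul]⟩

/-- The space of 2-cocycles of `F_φ` with coefficients in the adjoint module;
2-cochains are alternating bilinear maps `ℂ^{2p} × ℂ^{2p} → ℂ^{2p}`. -/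
def Z2F (p : ℕ) (φ : ℕ → ℂ) : Submodule ℂ (V p → V p → V p) where
  carrier := {ψ | IsBil p ψ ∧ (∀ x, ψ x x = 0) ∧
    ∀ x y z, mu p φ x (ψ y z) - mu p φ y (ψ x z) + mu p φ z (ψ x y)
      - ψ (mu p φ x y) z + ψ (mu p φ x z) y - ψ (mu p φ y z) x = 0}
  add_mem' := by
    rintro ψ₁ ψ₂ ⟨⟨hb₁, hb₂, hb₃, hb₄⟩, ha, hc⟩ ⟨⟨hb₁', hb₂', hb₃', hb₄'⟩, ha', hc'⟩
    refine ⟨⟨fun x x' y => ?_, fun c x y => ?_, fun x y y' => ?_, fun c x y => ?_⟩,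
      fun x => ?_, fun x y z => ?_⟩
    · simp only [Pi.add_apply, hb₁, hb₁']; abel
    · simp only [Pi.add_apply, hb₂, hb₂', smul_add]
    · simp only [Pi.add_apply, hb₃, hb₃']; abel
    · simp only [Pi.add_apply, hb₄, hb₄', smul_add]
    · simp only [Pi.add_apply, ha x, ha' x]; abel
    · have e := hc x y z
      have e' := hc' x y z
      simp only [Pi.add_apply, map_add]
      linear_combination (norm := module) e + e'
  zero_mem' := by
    refine ⟨⟨fun x x' y => ?_, fun c x y => ?_, fun x y y' => ?_, fun c x y => ?_⟩,
      fun x => ?_, fun x y z => ?_⟩ <;> simp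
  smul_mem' := by
    rintro c ψ ⟨⟨hb₁, hb₂, hb₃, hb₄⟩, ha, hc⟩
    refine ⟨⟨fun x x' y => ?_, fun c' x y => ?_, fun x y y' => ?_, fun c' x y => ?_⟩,
      fun x => ?_, fun x y z => ?_⟩
    · simp only [Pi.smul_apply, hb₁, smul_add]
    · simp only [Pi.smul_apply, hb₂, smul_comm c c']
    · simp only [Pi.smul_apply, hb₃, smul_add]
    · simp only [Pi.smul_apply, hb₄, smul_comm c c']
    · simp only [Pi.smul_apply, ha x, smul_zero]
    · have e := hc x y z
      simp only [Pi.smul_apply, map_smul]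
      linear_combination (norm := module) c • e

/-- The space of 2-coboundaries of `F_φ` with coefficients in the adjoint module. -/
def B2F (p : ℕ) (φ : ℕ → ℂ) : Submodule ℂ (V p → V p → V p) where
  carrier := {ψ | ∃ f : V p →ₗ[ℂ] V p,
    ∀ x y, ψ x y = mu p φ x (f y) - mu p φ y (f x) - f (mu p φ x y)}
  add_mem' := by
    rintro ψ₁ ψ₂ ⟨f₁, h₁⟩ ⟨f₂, h₂⟩
    refine ⟨f₁ + f₂, fun x y => ?_⟩
    simp only [Pi.add_apply, h₁ x y, h₂ x y, map_add, LinearMap.add_apply]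
    abel
  zero_mem' := ⟨0, by intro x y; simp⟩
  smul_mem' := by
    rintro c ψ ⟨f, h⟩
    refine ⟨c • f, fun x y => ?_⟩
    simp only [Pi.smul_apply, h x y, map_smul, LinearMap.smul_apply, smul_sub]

/-- The 2-cochains of degree `k` with respect to the grading `gr`. -/
def degF (p : ℕ) (k : ℤ) : Submodule ℂ (V p → V p → V p) where
  carrier := {ψ | ∀ (a b : ℤ), ∀ x ∈ gr p a, ∀ y ∈ gr p b, ψ x y ∈ gr p (a + b + k)}
  add_mem' := by
    intro ψ₁ ψ₂ h₁ h₂ a b x hx y hy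
    simpa using Submodule.add_mem _ (h₁ a b x hx y hy) (h₂ a b x hx y hy)
  zero_mem' := by intro a b x hx y hy; simp
  smul_mem' := by
    intro c ψ h a b x hx y hy
    simpa using Submodule.smul_mem _ c (h a b x hx y hy)

/-- A bilinear map, viewed as a plain function. -/
def toF (p : ℕ) (B : Bil p) : V p → V p → V p := fun x y => B x y

/-!
Since `ad X₂` is diagonal with eigenvalues `1, 0, -φ_k, 1 + φ_k` on `X₁, X₂, X_{2k+1}, X_{2k+2}`,
the Leibniz rule at `(X₂, X₁)`, `(X₂, X_{2k+1})`, `(X₂, X_{2k+2})` and `(X_{2k+1}, X_{2k+2})`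
forces, when `φ` avoids `Ω₁`, every derivation into the form `HasDerForm`:
`D X₁ = α X₁`, `D X_{2k+1} = t_k X₁ + d_k X_{2k+1}`, `D X_{2k+2} = u_k X₁ + e_k X_{2k+2}` with
`d_k + e_k = α`, and `D X₂ = β X₁ + ∑ (r_k X_{2k+1} + s_k X_{2k+2})` with `r_k = -φ_k u_k`,
`s_k = -(1 + φ_k) t_k`. Conversely every map of this form is a derivation. So multiplying
`r_k` and `s_k` by `φ'_k / φ_k` and `(1 + φ'_k) / (1 + φ_k)` maps `Der(F_φ)` bijectively onto
`Der(F_φ')`. With `P` the projection onto `ℂ X₂` and `Λ` the diagonal rescaling, this map is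
`D ↦ D (1 - P) + Λ D P`. It preserves commutators because `P D = 0` for every derivation and
`[D, Λ] E X₂ = -∑ (φ'_k - φ_k) (t_k u'_k + u_k t'_k) X₁` is symmetric in `D` and `E`.
-/

open Finset

section Twist

variable (R : Type*) {A : Type*} [CommRing R] [Ring A] [Algebra R A]

def twist (Λ P : A) : A →ₗ[R] A :=
  LinearMap.mulRight R (1 - P) + LinearMap.mulLeft R Λ ∘ₗ LinearMap.mulRight R P

variable {R} {Λ Λ' P : A}

lemma twist_apply (D : A) : twist R Λ P D = D * (1 - P) + Λ * D * P := by
  simp [twist, mul_assoc]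

lemma twist_twist (hP : IsIdempotentElem P) (hΛ : Λ' * Λ = 1) (D : A) :
    twist R Λ' P (twist R Λ P D) = D := by
  have hP' : P * (1 - P) = 0 := by rw [mul_sub, mul_one, hP.eq, sub_self]
  have hP'' : (1 - P) * P = 0 := by rw [sub_mul, one_mul, hP.eq, sub_self]
  calc twist R Λ' P (twist R Λ P D)
      = D * ((1 - P) * (1 - P)) + Λ * D * (P * (1 - P)) + Λ' * D * ((1 - P) * P)
          + (Λ' * Λ) * D * (P * P) := by simp only [twist_apply]; noncomm_ring
    _ = D := by rw [hP.one_sub.eq, hP.eq, hP', hP'', hΛ]; noncomm_ring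

lemma twist_mul_twist (hPΛ : P * Λ = P) {D E : A} (hE : P * E = 0) :
    twist R Λ P D * twist R Λ P E = D * E * (1 - P) + D * Λ * E * P := by
  calc twist R Λ P D * twist R Λ P E
      = D * E * (1 - P) + D * Λ * E * P - D * (P * E) * (1 - P) - D * ((P * Λ) * E) * P
          + Λ * D * (P * E) * (1 - P) + Λ * D * ((P * Λ) * E) * P := by
        simp only [twist_apply]; noncomm_ring
    _ = D * E * (1 - P) + D * Λ * E * P := by simp [hPΛ, hE]

lemma twist_lie (hPΛ : P * Λ = P) {D E : A} (hD : P * D = 0) (hE : P * E = 0)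
    (h : ⁅D, Λ⁆ * E * P = ⁅E, Λ⁆ * D * P) :
    twist R Λ P ⁅D, E⁆ = ⁅twist R Λ P D, twist R Λ P E⁆ := by
  rw [Ring.lie_def, Ring.lie_def, twist_mul_twist hPΛ hE, twist_mul_twist hPΛ hD, twist_apply,
    ← sub_eq_zero]
  calc (D * E - E * D) * (1 - P) + Λ * (D * E - E * D) * P
        - (D * E * (1 - P) + D * Λ * E * P - (E * D * (1 - P) + E * Λ * D * P))
      = ⁅E, Λ⁆ * D * P - ⁅D, Λ⁆ * E * P := by simp only [Ring.lie_def]; noncomm_ring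
    _ = 0 := by rw [h, sub_self]

end Twist

section LieEquiv

variable {R A : Type*} [CommRing R] [LieRing A] [LieAlgebra R A]

def LieSubalgebra.equivOfLinearMap (L₁ L₂ : LieSubalgebra R A) (f g : A →ₗ[R] A)
    (hf : ∀ x ∈ L₁, f x ∈ L₂) (hg : ∀ y ∈ L₂, g y ∈ L₁) (hgf : ∀ x ∈ L₁, g (f x) = x)
    (hfg : ∀ y ∈ L₂, f (g y) = y) (hlie : ∀ x ∈ L₁, ∀ y ∈ L₁, f ⁅x, y⁆ = ⁅f x, f y⁆) :
    L₁ ≃ₗ⁅R⁆ L₂ where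
  toFun x := ⟨f x, hf x x.2⟩
  map_add' x y := Subtype.ext (map_add f (x : A) y)
  map_smul' c x := Subtype.ext (map_smul f c (x : A))
  map_lie' {x y} := Subtype.ext (hlie x x.2 y y.2)
  invFun y := ⟨g y, hg y y.2⟩
  left_inv x := Subtype.ext (hgf x x.2)
  right_inv y := Subtype.ext (hfg y y.2)

end LieEquiv

section Coordinates

lemma sum_Icc_three_eq_sum_pairs {M : Type*} [AddCommMonoid M] (g : ℕ → M) (q : ℕ) :
    ∑ j ∈ Icc 3 (2 * q + 2), g j = ∑ k ∈ Icc 1 q, (g (2 * k + 1) + g (2 * k + 2)) := by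
  induction q with
  | zero => simp
  | succ n ih =>
    rw [show 2 * (n + 1) + 2 = 2 * n + 2 + 1 + 1 by ring, sum_Icc_succ_top (by omega),
      sum_Icc_succ_top (by omega), ih, sum_Icc_succ_top (by omega), add_assoc]
    rfl

variable {p : ℕ}

lemma coordL_apply {j : ℕ} (h1 : 1 ≤ j) (h2 : j ≤ 2 * p) (x : V p) :
    coordL p j x = x ⟨j - 1, by omega⟩ := by
  rw [coordL, dif_pos (by omega : j - 1 < 2 * p)]
  rfl

lemma coordL_X {a : ℕ} (j : ℕ) (h1 : 1 ≤ a) (h2 : a ≤ 2 * p) :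
    coordL p a (X p j) = if a = j then 1 else 0 := by
  rw [coordL_apply h1 h2, X]
  congr 1
  simp only [eq_iff_iff]
  omega

lemma coordL_X_self {a : ℕ} (h1 : 1 ≤ a) (h2 : a ≤ 2 * p) : coordL p a (X p a) = 1 := by
  rw [coordL_X a h1 h2, if_pos rfl]

lemma coordL_X_of_ne {a : ℕ} (j : ℕ) (h1 : 1 ≤ a) (h2 : a ≤ 2 * p) (h : a ≠ j) :
    coordL p a (X p j) = 0 := by
  rw [coordL_X j h1 h2, if_neg h]

lemma eq_sum_coordL_smul_X (v : V p) : v = ∑ j ∈ Icc 1 (2 * p), coordL p j v • X p j := by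
  funext m
  rw [Finset.sum_apply, sum_eq_single ((m : ℕ) + 1)]
  · simp [X, coordL_apply (p := p) (j := m + 1) (by omega) (by omega)]
  · intro b _ hbm
    simp [X, Ne.symm hbm]
  · intro h
    exact absurd (mem_Icc.mpr ⟨by omega, by omega⟩) h

end Coordinates

section OddEvenSum

variable {p : ℕ}

def oddEvenSum (p : ℕ) (f g : ℕ → ℂ) : V p :=
  ∑ k ∈ Icc 1 (p - 1), (f k • X p (2 * k + 1) + g k • X p (2 * k + 2))

lemma eq_coordL_smul_add_oddEvenSum (hp : 0 < p) (v : V p) :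
    v = coordL p 1 v • X p 1 + coordL p 2 v • X p 2 +
      oddEvenSum p (fun k => coordL p (2 * k + 1) v) (fun k => coordL p (2 * k + 2) v) := by
  conv_lhs => rw [eq_sum_coordL_smul_X v]
  have hsplit : Icc 1 (2 * p) = {1, 2} ∪ Icc 3 (2 * (p - 1) + 2) := by
    ext a
    simp only [mem_Icc, mem_union, mem_insert, mem_singleton]
    omega
  rw [hsplit, sum_union (by simp), sum_Icc_three_eq_sum_pairs, oddEvenSum,
    sum_pair (by norm_num)]

lemma oddEvenSum_eq_zero {f g : ℕ → ℂ} (hf : ∀ k ∈ Icc 1 (p - 1), f k = 0)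
    (hg : ∀ k ∈ Icc 1 (p - 1), g k = 0) : oddEvenSum p f g = 0 :=
  sum_eq_zero fun k hk => by simp [hf k hk, hg k hk]

lemma map_oddEvenSum {M : Type*} [AddCommGroup M] [Module ℂ M] (F : V p →ₗ[ℂ] M)
    (f g : ℕ → ℂ) :
    F (oddEvenSum p f g) =
      ∑ k ∈ Icc 1 (p - 1), (f k • F (X p (2 * k + 1)) + g k • F (X p (2 * k + 2))) := by
  simp only [oddEvenSum, map_sum, map_add, map_smul]

lemma coordL_oddEvenSum_of_le_two {j : ℕ} (h1 : 1 ≤ j) (h2 : j ≤ 2) (f g : ℕ → ℂ) :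
    coordL p j (oddEvenSum p f g) = 0 := by
  rw [map_oddEvenSum]
  refine sum_eq_zero fun k hk => ?_
  obtain ⟨hk1, hk2⟩ := mem_Icc.mp hk
  simp (disch := omega) [coordL_X_of_ne]

lemma coordL_odd_oddEvenSum {k : ℕ} (hk : k ∈ Icc 1 (p - 1)) (f g : ℕ → ℂ) :
    coordL p (2 * k + 1) (oddEvenSum p f g) = f k := by
  obtain ⟨hk1, hk2⟩ := mem_Icc.mp hk
  rw [map_oddEvenSum, sum_eq_single_of_mem k hk fun j hj hjk => ?_]
  · simp (disch := omega) [coordL_X_self, coordL_X_of_ne]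
  · obtain ⟨hj1, hj2⟩ := mem_Icc.mp hj
    simp (disch := omega) [coordL_X_of_ne]

lemma coordL_even_oddEvenSum {k : ℕ} (hk : k ∈ Icc 1 (p - 1)) (f g : ℕ → ℂ) :
    coordL p (2 * k + 2) (oddEvenSum p f g) = g k := by
  obtain ⟨hk1, hk2⟩ := mem_Icc.mp hk
  rw [map_oddEvenSum, sum_eq_single_of_mem k hk fun j hj hjk => ?_]
  · simp (disch := omega) [coordL_X_self, coordL_X_of_ne]
  · obtain ⟨hj1, hj2⟩ := mem_Icc.mp hj
    simp (disch := omega) [coordL_X_of_ne]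

lemma oddEvenSum_congr {f g f' g' : ℕ → ℂ} (hf : ∀ k ∈ Icc 1 (p - 1), f k = f' k)
    (hg : ∀ k ∈ Icc 1 (p - 1), g k = g' k) : oddEvenSum p f g = oddEvenSum p f' g' :=
  sum_congr rfl fun k hk => by rw [hf k hk, hg k hk]

lemma eq_of_coordL_eq (hp : 0 < p) {v w : V p} (h1 : coordL p 1 v = coordL p 1 w)
    (h2 : coordL p 2 v = coordL p 2 w)
    (hodd : ∀ k ∈ Icc 1 (p - 1), coordL p (2 * k + 1) v = coordL p (2 * k + 1) w)
    (heven : ∀ k ∈ Icc 1 (p - 1), coordL p (2 * k + 2) v = coordL p (2 * k + 2) w) :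
    v = w := by
  rw [eq_coordL_smul_add_oddEvenSum hp v, eq_coordL_smul_add_oddEvenSum hp w, h1, h2,
    oddEvenSum_congr hodd heven]

lemma linearMap_ext_X {M : Type*} [AddCommGroup M] [Module ℂ M] (hp : 0 < p)
    {F G : V p →ₗ[ℂ] M} (h1 : F (X p 1) = G (X p 1)) (h2 : F (X p 2) = G (X p 2))
    (hodd : ∀ k ∈ Icc 1 (p - 1), F (X p (2 * k + 1)) = G (X p (2 * k + 1)))
    (heven : ∀ k ∈ Icc 1 (p - 1), F (X p (2 * k + 2)) = G (X p (2 * k + 2))) : F = G := by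
  refine LinearMap.ext fun v => ?_
  rw [eq_coordL_smul_add_oddEvenSum hp v]
  simp only [map_add, map_smul, map_oddEvenSum, h1, h2]
  exact congrArg _ (sum_congr rfl fun k hk => by rw [hodd k hk, heven k hk])

end OddEvenSum

section Bracket

variable {p : ℕ} (φ : ℕ → ℂ)

lemma elem_apply (a b : ℕ) (v x y : V p) :
    elem p a b v x y = (coordL p a x * coordL p b y - coordL p b x * coordL p a y) • v := by
  simp [elem, sub_smul, mul_smul]

lemma mu_apply (x y : V p) :
    mu p φ x y =
      (coordL p 1 x * coordL p 2 y - coordL p 2 x * coordL p 1 y) • (-(X p 1)) +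
      ∑ k ∈ Icc 1 (p - 1),
        ((coordL p (2 * k + 1) x * coordL p (2 * k + 2) y
            - coordL p (2 * k + 2) x * coordL p (2 * k + 1) y) • (-(X p 1))
          + (coordL p 2 x * coordL p (2 * k + 1) y
            - coordL p (2 * k + 1) x * coordL p 2 y) • (-(φ k) • X p (2 * k + 1))
          + (coordL p 2 x * coordL p (2 * k + 2) y
            - coordL p (2 * k + 2) x * coordL p 2 y) • ((1 + φ k) • X p (2 * k + 2))) := by
  simp only [mu, LinearMap.add_apply, LinearMap.sum_apply, elem_apply]

lemma mu_self (x : V p) : mu p φ x x = 0 := by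
  rw [mu_apply]
  simp only [mul_comm, sub_self, zero_smul, zero_add]
  exact sum_eq_zero fun k _ => by simp

lemma mu_swap (x y : V p) : mu p φ y x = -mu p φ x y := by
  have h := mu_self φ (x + y)
  simp only [map_add, LinearMap.add_apply, mu_self, zero_add, add_zero] at h
  exact eq_neg_of_add_eq_zero_left h

lemma mu_apply_X_one (hp : 0 < p) (x : V p) : mu p φ x (X p 1) = coordL p 2 x • X p 1 := by
  rw [mu_apply, sum_eq_zero fun k hk => ?_]
  · simp (disch := omega) [coordL_X_self, coordL_X_of_ne]
  · obtain ⟨hk1, hk2⟩ := mem_Icc.mp hk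
    simp (disch := omega) [coordL_X_of_ne]

lemma mu_apply_X_two (hp : 0 < p) (x : V p) :
    mu p φ x (X p 2) = -coordL p 1 x • X p 1 + oddEvenSum p
      (fun k => φ k * coordL p (2 * k + 1) x) (fun k => -((1 + φ k) * coordL p (2 * k + 2) x)) := by
  rw [mu_apply, oddEvenSum]
  simp (disch := omega) only [coordL_X_self, coordL_X_of_ne]
  congr 1
  · module
  refine sum_congr rfl fun k hk => ?_
  obtain ⟨hk1, hk2⟩ := mem_Icc.mp hk
  simp (disch := omega) only [coordL_X_of_ne]
  module

lemma mu_apply_X_odd {k : ℕ} (hk : k ∈ Icc 1 (p - 1)) (x : V p) :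
    mu p φ x (X p (2 * k + 1)) =
      coordL p (2 * k + 2) x • X p 1 - (φ k * coordL p 2 x) • X p (2 * k + 1) := by
  obtain ⟨hk1, hk2⟩ := mem_Icc.mp hk
  rw [mu_apply, sum_eq_single_of_mem k hk fun j hj hjk => ?_]
  · simp (disch := omega) only [coordL_X_self, coordL_X_of_ne]
    module
  · obtain ⟨hj1, hj2⟩ := mem_Icc.mp hj
    simp (disch := omega) only [coordL_X_of_ne]
    module

lemma mu_apply_X_even {k : ℕ} (hk : k ∈ Icc 1 (p - 1)) (x : V p) :
    mu p φ x (X p (2 * k + 2)) =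
      -coordL p (2 * k + 1) x • X p 1 + ((1 + φ k) * coordL p 2 x) • X p (2 * k + 2) := by
  obtain ⟨hk1, hk2⟩ := mem_Icc.mp hk
  rw [mu_apply, sum_eq_single_of_mem k hk fun j hj hjk => ?_]
  · simp (disch := omega) only [coordL_X_self, coordL_X_of_ne]
    module
  · obtain ⟨hj1, hj2⟩ := mem_Icc.mp hj
    simp (disch := omega) only [coordL_X_of_ne]
    module

lemma mu_two_one (hp : 0 < p) : mu p φ (X p 2) (X p 1) = X p 1 := by
  rw [mu_apply_X_one φ hp, coordL_X_self (by omega) (by omega), one_smul]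

lemma mu_one_two (hp : 0 < p) : mu p φ (X p 1) (X p 2) = -X p 1 := by
  rw [mu_swap, mu_two_one φ hp]

lemma mu_two_odd {k : ℕ} (hk : k ∈ Icc 1 (p - 1)) :
    mu p φ (X p 2) (X p (2 * k + 1)) = -φ k • X p (2 * k + 1) := by
  obtain ⟨hk1, hk2⟩ := mem_Icc.mp hk
  simp (disch := omega) [mu_apply_X_odd φ hk, coordL_X_self, coordL_X_of_ne]

lemma mu_two_even {k : ℕ} (hk : k ∈ Icc 1 (p - 1)) :
    mu p φ (X p 2) (X p (2 * k + 2)) = (1 + φ k) • X p (2 * k + 2) := by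
  obtain ⟨hk1, hk2⟩ := mem_Icc.mp hk
  simp (disch := omega) [mu_apply_X_even φ hk, coordL_X_self, coordL_X_of_ne]

lemma mu_one_odd {k : ℕ} (hk : k ∈ Icc 1 (p - 1)) : mu p φ (X p 1) (X p (2 * k + 1)) = 0 := by
  obtain ⟨hk1, hk2⟩ := mem_Icc.mp hk
  simp (disch := omega) [mu_apply_X_odd φ hk, coordL_X_of_ne]

lemma mu_one_even {k : ℕ} (hk : k ∈ Icc 1 (p - 1)) : mu p φ (X p 1) (X p (2 * k + 2)) = 0 := by
  obtain ⟨hk1, hk2⟩ := mem_Icc.mp hk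
  simp (disch := omega) [mu_apply_X_even φ hk, coordL_X_of_ne]

lemma mu_odd_odd (k : ℕ) {l : ℕ} (hl : l ∈ Icc 1 (p - 1)) :
    mu p φ (X p (2 * k + 1)) (X p (2 * l + 1)) = 0 := by
  obtain ⟨hl1, hl2⟩ := mem_Icc.mp hl
  simp (disch := omega) [mu_apply_X_odd φ hl, coordL_X_of_ne]

lemma mu_even_even {k l : ℕ} (hk : k ∈ Icc 1 (p - 1)) (hl : l ∈ Icc 1 (p - 1)) :
    mu p φ (X p (2 * k + 2)) (X p (2 * l + 2)) = 0 := by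
  obtain ⟨hk1, hk2⟩ := mem_Icc.mp hk
  obtain ⟨hl1, hl2⟩ := mem_Icc.mp hl
  simp (disch := omega) [mu_apply_X_even φ hl, coordL_X_of_ne]

lemma mu_odd_even {k l : ℕ} (hk : k ∈ Icc 1 (p - 1)) (hl : l ∈ Icc 1 (p - 1)) :
    mu p φ (X p (2 * k + 1)) (X p (2 * l + 2)) = if k = l then -X p 1 else 0 := by
  obtain ⟨hk1, hk2⟩ := mem_Icc.mp hk
  obtain ⟨hl1, hl2⟩ := mem_Icc.mp hl
  rw [mu_apply_X_even φ hl, coordL_X _ (by omega) (by omega),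
    coordL_X_of_ne _ (by omega) (by omega) (by omega)]
  split_ifs <;> simp_all

end Bracket

section Omega

variable {p : ℕ} {φ : ℕ → ℂ}

lemma AvoidsOmega1.ne_zero (h : AvoidsOmega1 p φ) {k : ℕ} (hk : k ∈ Icc 1 (p - 1)) :
    φ k ≠ 0 := by
  obtain ⟨hk1, hk2⟩ := mem_Icc.mp hk
  exact (h k k hk1 hk2 hk1 hk2).2.2.2.1

lemma AvoidsOmega1.one_add_ne_zero (h : AvoidsOmega1 p φ) {k : ℕ} (hk : k ∈ Icc 1 (p - 1)) :
    1 + φ k ≠ 0 := by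
  obtain ⟨hk1, hk2⟩ := mem_Icc.mp hk
  exact fun h0 => (h k k hk1 hk2 hk1 hk2).2.2.2.2.1 (by linear_combination h0)

lemma AvoidsOmega1.one_add_add_ne_zero (h : AvoidsOmega1 p φ) {j k : ℕ}
    (hj : j ∈ Icc 1 (p - 1)) (hk : k ∈ Icc 1 (p - 1)) : 1 + φ j + φ k ≠ 0 := by
  obtain ⟨hj1, hj2⟩ := mem_Icc.mp hj
  obtain ⟨hk1, hk2⟩ := mem_Icc.mp hk
  exact (h j k hj1 hj2 hk1 hk2).1

lemma AvoidsOmega1.ne_of_ne (h : AvoidsOmega1 p φ) {j k : ℕ} (hj : j ∈ Icc 1 (p - 1))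
    (hk : k ∈ Icc 1 (p - 1)) (hjk : j ≠ k) : φ j ≠ φ k := by
  obtain ⟨hj1, hj2⟩ := mem_Icc.mp hj
  obtain ⟨hk1, hk2⟩ := mem_Icc.mp hk
  exact (h j k hj1 hj2 hk1 hk2).2.2.1 hjk

end Omega

structure HasDerForm (p : ℕ) (φ : ℕ → ℂ) (D : Module.End ℂ (V p)) (α β : ℂ)
    (r s t u d e : ℕ → ℂ) : Prop where
  apply_one : D (X p 1) = α • X p 1
  apply_two : D (X p 2) = β • X p 1 + oddEvenSum p r s
  apply_odd : ∀ k ∈ Icc 1 (p - 1), D (X p (2 * k + 1)) = t k • X p 1 + d k • X p (2 * k + 1)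
  apply_even : ∀ k ∈ Icc 1 (p - 1), D (X p (2 * k + 2)) = u k • X p 1 + e k • X p (2 * k + 2)
  one_add_mul_t : ∀ k ∈ Icc 1 (p - 1), (1 + φ k) * t k = -s k
  mul_u : ∀ k ∈ Icc 1 (p - 1), φ k * u k = -r k
  d_add_e : ∀ k ∈ Icc 1 (p - 1), d k + e k = α

section Derivations

variable {p : ℕ} {φ : ℕ → ℂ} {D : Module.End ℂ (V p)}

lemma coordL_one_mu_X_two (hp : 0 < p) (v : V p) :
    coordL p 1 (mu p φ (X p 2) v) = coordL p 1 v := by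
  rw [mu_swap φ v (X p 2)]
  simp (disch := omega) [mu_apply_X_two φ hp, coordL_X_self,
    coordL_oddEvenSum_of_le_two]

lemma coordL_two_mu_X_two (hp : 0 < p) (v : V p) : coordL p 2 (mu p φ (X p 2) v) = 0 := by
  rw [mu_swap φ v (X p 2)]
  simp (disch := omega) [mu_apply_X_two φ hp, coordL_X_of_ne,
    coordL_oddEvenSum_of_le_two]

lemma coordL_odd_mu_X_two (hp : 0 < p) {k : ℕ} (hk : k ∈ Icc 1 (p - 1)) (v : V p) :
    coordL p (2 * k + 1) (mu p φ (X p 2) v) = -φ k * coordL p (2 * k + 1) v := by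
  obtain ⟨hk1, hk2⟩ := mem_Icc.mp hk
  rw [mu_swap φ v (X p 2)]
  simp (disch := omega) [mu_apply_X_two φ hp, coordL_X_of_ne,
    coordL_odd_oddEvenSum hk]

lemma coordL_even_mu_X_two (hp : 0 < p) {k : ℕ} (hk : k ∈ Icc 1 (p - 1)) (v : V p) :
    coordL p (2 * k + 2) (mu p φ (X p 2) v) = (1 + φ k) * coordL p (2 * k + 2) v := by
  obtain ⟨hk1, hk2⟩ := mem_Icc.mp hk
  rw [mu_swap φ v (X p 2)]
  simp (disch := omega) [mu_apply_X_two φ hp, coordL_X_of_ne,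
    coordL_even_oddEvenSum hk]

lemma coordL_two_apply_X_two_of_mem_derLie (hp : 0 < p) (hD : D ∈ derLie p φ) :
    coordL p 2 (D (X p 2)) = 0 := by
  have h := congrArg (coordL p 1) (hD (X p 2) (X p 1))
  rw [mu_two_one φ hp, mu_apply_X_one φ hp, map_add, map_smul,
    coordL_X_self (by omega) (by omega), coordL_one_mu_X_two hp] at h
  simpa using h

lemma apply_X_one_of_mem_derLie (hp : 0 < p) (hΩ : AvoidsOmega1 p φ) (hD : D ∈ derLie p φ) :
    D (X p 1) = coordL p 1 (D (X p 1)) • X p 1 := by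
  have h := hD (X p 2) (X p 1)
  rw [mu_two_one φ hp, mu_apply_X_one φ hp,
    coordL_two_apply_X_two_of_mem_derLie hp hD, zero_smul, zero_add] at h
  apply eq_of_coordL_eq hp
  · simp (disch := omega) [coordL_X_self]
  · rw [h, coordL_two_mu_X_two hp]
    simp (disch := omega) [coordL_X_of_ne]
  · intro k hk
    obtain ⟨hk1, hk2⟩ := mem_Icc.mp hk
    have hc := congrArg (coordL p (2 * k + 1)) h
    rw [coordL_odd_mu_X_two hp hk] at hc
    have : (1 + φ k) * coordL p (2 * k + 1) (D (X p 1)) = 0 := by linear_combination hc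
    simp (disch := omega) [coordL_X_of_ne, (mul_eq_zero.mp this).resolve_left
      (hΩ.one_add_ne_zero hk)]
  · intro k hk
    obtain ⟨hk1, hk2⟩ := mem_Icc.mp hk
    have hc := congrArg (coordL p (2 * k + 2)) h
    rw [coordL_even_mu_X_two hp hk] at hc
    have : φ k * coordL p (2 * k + 2) (D (X p 1)) = 0 := by linear_combination -hc
    simp (disch := omega) [coordL_X_of_ne, (mul_eq_zero.mp this).resolve_left
      (hΩ.ne_zero hk)]

lemma apply_X_two_of_mem_derLie (hp : 0 < p) (hD : D ∈ derLie p φ) :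
    D (X p 2) = coordL p 1 (D (X p 2)) • X p 1 + oddEvenSum p
      (fun k => coordL p (2 * k + 1) (D (X p 2))) (fun k => coordL p (2 * k + 2) (D (X p 2))) := by
  conv_lhs => rw [eq_coordL_smul_add_oddEvenSum hp (D (X p 2))]
  rw [coordL_two_apply_X_two_of_mem_derLie hp hD, zero_smul, add_zero]

lemma smul_apply_X_odd_of_mem_derLie (hp : 0 < p) (hD : D ∈ derLie p φ) {k : ℕ}
    (hk : k ∈ Icc 1 (p - 1)) :
    -φ k • D (X p (2 * k + 1)) =
      coordL p (2 * k + 2) (D (X p 2)) • X p 1 + mu p φ (X p 2) (D (X p (2 * k + 1))) := by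
  have h := hD (X p 2) (X p (2 * k + 1))
  rwa [mu_two_odd φ hk, map_smul, mu_apply_X_odd φ hk, coordL_two_apply_X_two_of_mem_derLie hp hD,
    mul_zero, zero_smul, sub_zero] at h

lemma smul_apply_X_even_of_mem_derLie (hp : 0 < p) (hD : D ∈ derLie p φ) {k : ℕ}
    (hk : k ∈ Icc 1 (p - 1)) :
    (1 + φ k) • D (X p (2 * k + 2)) =
      -coordL p (2 * k + 1) (D (X p 2)) • X p 1 + mu p φ (X p 2) (D (X p (2 * k + 2))) := by
  have h := hD (X p 2) (X p (2 * k + 2))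
  rwa [mu_two_even φ hk, map_smul, mu_apply_X_even φ hk,
    coordL_two_apply_X_two_of_mem_derLie hp hD, mul_zero, zero_smul, add_zero] at h

lemma apply_X_odd_of_mem_derLie (hp : 0 < p) (hΩ : AvoidsOmega1 p φ) (hD : D ∈ derLie p φ)
    {k : ℕ} (hk : k ∈ Icc 1 (p - 1)) :
    D (X p (2 * k + 1)) = coordL p 1 (D (X p (2 * k + 1))) • X p 1
      + coordL p (2 * k + 1) (D (X p (2 * k + 1))) • X p (2 * k + 1) := by
  have h := smul_apply_X_odd_of_mem_derLie hp hD hk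
  obtain ⟨hk1, hk2⟩ := mem_Icc.mp hk
  apply eq_of_coordL_eq hp
  · simp (disch := omega) [coordL_X_self, coordL_X_of_ne]
  · have hc := congrArg (coordL p 2) h
    simp (disch := omega) only [map_add, map_smul, coordL_two_mu_X_two hp, coordL_X_of_ne,
      smul_eq_mul, mul_zero, add_zero, neg_mul, neg_eq_zero, mul_eq_zero] at hc
    simp (disch := omega) [coordL_X_of_ne, hc.resolve_left (hΩ.ne_zero hk)]
  · intro j hj
    obtain ⟨hj1, hj2⟩ := mem_Icc.mp hj
    by_cases hjk : j = k
    · subst hjk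
      simp (disch := omega) [coordL_X_self, coordL_X_of_ne]
    have hc := congrArg (coordL p (2 * j + 1)) h
    simp (disch := omega) only [map_add, map_smul, coordL_odd_mu_X_two hp hj, coordL_X_of_ne,
      smul_eq_mul, mul_zero, zero_add] at hc
    have : (φ j - φ k) * coordL p (2 * j + 1) (D (X p (2 * k + 1))) = 0 := by
      linear_combination hc
    simp (disch := omega) [coordL_X_of_ne, (mul_eq_zero.mp this).resolve_left
      (sub_ne_zero.mpr (hΩ.ne_of_ne hj hk hjk))]
  · intro j hj
    obtain ⟨hj1, hj2⟩ := mem_Icc.mp hj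
    have hc := congrArg (coordL p (2 * j + 2)) h
    simp (disch := omega) only [map_add, map_smul, coordL_even_mu_X_two hp hj, coordL_X_of_ne,
      smul_eq_mul, mul_zero, zero_add] at hc
    have : (1 + φ j + φ k) * coordL p (2 * j + 2) (D (X p (2 * k + 1))) = 0 := by
      linear_combination -hc
    simp (disch := omega) [coordL_X_of_ne, (mul_eq_zero.mp this).resolve_left
      (hΩ.one_add_add_ne_zero hj hk)]

lemma apply_X_even_of_mem_derLie (hp : 0 < p) (hΩ : AvoidsOmega1 p φ) (hD : D ∈ derLie p φ)
    {k : ℕ} (hk : k ∈ Icc 1 (p - 1)) :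
    D (X p (2 * k + 2)) = coordL p 1 (D (X p (2 * k + 2))) • X p 1
      + coordL p (2 * k + 2) (D (X p (2 * k + 2))) • X p (2 * k + 2) := by
  have h := smul_apply_X_even_of_mem_derLie hp hD hk
  obtain ⟨hk1, hk2⟩ := mem_Icc.mp hk
  apply eq_of_coordL_eq hp
  · simp (disch := omega) [coordL_X_self, coordL_X_of_ne]
  · have hc := congrArg (coordL p 2) h
    simp (disch := omega) only [map_add, map_smul, coordL_two_mu_X_two hp,
      coordL_X_of_ne, smul_eq_mul, mul_zero, add_zero, mul_eq_zero] at hc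
    simp (disch := omega) [coordL_X_of_ne, hc.resolve_left (hΩ.one_add_ne_zero hk)]
  · intro j hj
    obtain ⟨hj1, hj2⟩ := mem_Icc.mp hj
    have hc := congrArg (coordL p (2 * j + 1)) h
    simp (disch := omega) only [map_add, map_smul, coordL_odd_mu_X_two hp hj,
      coordL_X_of_ne, smul_eq_mul, mul_zero, zero_add] at hc
    have : (1 + φ j + φ k) * coordL p (2 * j + 1) (D (X p (2 * k + 2))) = 0 := by
      linear_combination hc
    simp (disch := omega) [coordL_X_of_ne, (mul_eq_zero.mp this).resolve_left
      (hΩ.one_add_add_ne_zero hj hk)]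
  · intro j hj
    obtain ⟨hj1, hj2⟩ := mem_Icc.mp hj
    by_cases hjk : j = k
    · subst hjk
      simp (disch := omega) [coordL_X_self, coordL_X_of_ne]
    have hc := congrArg (coordL p (2 * j + 2)) h
    simp (disch := omega) only [map_add, map_smul, coordL_even_mu_X_two hp hj,
      coordL_X_of_ne, smul_eq_mul, mul_zero, zero_add] at hc
    have : (φ j - φ k) * coordL p (2 * j + 2) (D (X p (2 * k + 2))) = 0 := by
      linear_combination -hc
    simp (disch := omega) [coordL_X_of_ne, (mul_eq_zero.mp this).resolve_left
      (sub_ne_zero.mpr (hΩ.ne_of_ne hj hk hjk))]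

lemma one_add_mul_coordL_one_apply_X_odd (hp : 0 < p) (hD : D ∈ derLie p φ) {k : ℕ}
    (hk : k ∈ Icc 1 (p - 1)) :
    (1 + φ k) * coordL p 1 (D (X p (2 * k + 1))) = -coordL p (2 * k + 2) (D (X p 2)) := by
  have hc := congrArg (coordL p 1) (smul_apply_X_odd_of_mem_derLie hp hD hk)
  simp (disch := omega) only [map_add, map_smul, coordL_one_mu_X_two hp, coordL_X_self,
    smul_eq_mul, mul_one] at hc
  linear_combination -hc

lemma mul_coordL_one_apply_X_even (hp : 0 < p) (hD : D ∈ derLie p φ) {k : ℕ}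
    (hk : k ∈ Icc 1 (p - 1)) :
    φ k * coordL p 1 (D (X p (2 * k + 2))) = -coordL p (2 * k + 1) (D (X p 2)) := by
  have hc := congrArg (coordL p 1) (smul_apply_X_even_of_mem_derLie hp hD hk)
  simp (disch := omega) only [map_add, map_smul, coordL_one_mu_X_two hp,
    coordL_X_self, smul_eq_mul, mul_one] at hc
  linear_combination hc

lemma coordL_odd_add_coordL_even_of_mem_derLie (hp : 0 < p) (hD : D ∈ derLie p φ) {k : ℕ}
    (hk : k ∈ Icc 1 (p - 1)) :
    coordL p (2 * k + 1) (D (X p (2 * k + 1))) + coordL p (2 * k + 2) (D (X p (2 * k + 2))) =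
      coordL p 1 (D (X p 1)) := by
  obtain ⟨hk1, hk2⟩ := mem_Icc.mp hk
  have hc := congrArg (coordL p 1) (hD (X p (2 * k + 1)) (X p (2 * k + 2)))
  rw [mu_odd_even φ hk hk, if_pos rfl, mu_apply_X_even φ hk, mu_swap φ _ (X p (2 * k + 1)),
    mu_apply_X_odd φ hk] at hc
  simp (disch := omega) only [map_add, map_sub, map_neg, map_smul, coordL_X_self,
    coordL_X_of_ne, smul_eq_mul, mul_one, mul_zero, add_zero, sub_zero] at hc
  linear_combination hc

theorem hasDerForm_of_mem_derLie (hp : 0 < p) (hΩ : AvoidsOmega1 p φ) (hD : D ∈ derLie p φ) :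
    ∃ α β r s t u d e, HasDerForm p φ D α β r s t u d e :=
  ⟨_, _, _, _, _, _, _, _, apply_X_one_of_mem_derLie hp hΩ hD, apply_X_two_of_mem_derLie hp hD,
    fun _ hk => apply_X_odd_of_mem_derLie hp hΩ hD hk,
    fun _ hk => apply_X_even_of_mem_derLie hp hΩ hD hk,
    fun _ hk => one_add_mul_coordL_one_apply_X_odd hp hD hk,
    fun _ hk => mul_coordL_one_apply_X_even hp hD hk,
    fun _ hk => coordL_odd_add_coordL_even_of_mem_derLie hp hD hk⟩

end Derivations

section Leibniz

variable {p : ℕ} {φ : ℕ → ℂ} {D : Module.End ℂ (V p)}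

def leibnizDefect (φ : ℕ → ℂ) (D : Module.End ℂ (V p)) : Bil p :=
  (mu p φ).compr₂ D - (mu p φ).comp D - (mu p φ).compl₂ D

lemma leibnizDefect_apply (x y : V p) :
    leibnizDefect φ D x y = D (mu p φ x y) - mu p φ (D x) y - mu p φ x (D y) := rfl

lemma leibnizDefect_swap (x y : V p) : leibnizDefect φ D y x = -leibnizDefect φ D x y := by
  simp only [leibnizDefect_apply, mu_swap φ x, mu_swap φ (D x), map_neg]
  abel

lemma leibnizDefect_self (x : V p) : leibnizDefect φ D x x = 0 := by
  rw [← neg_eq_self, ← leibnizDefect_swap]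

lemma mem_derLie_of_leibnizDefect_eq_zero (h : leibnizDefect φ D = 0) : D ∈ derLie p φ :=
  fun x y => by
    simpa [leibnizDefect_apply, sub_sub, sub_eq_zero] using LinearMap.congr_fun₂ h x y

lemma mu_X_one_oddEvenSum (f g : ℕ → ℂ) : mu p φ (X p 1) (oddEvenSum p f g) = 0 := by
  rw [map_oddEvenSum]
  exact sum_eq_zero fun k hk => by simp [mu_one_odd φ hk, mu_one_even φ hk]

variable {α β : ℂ} {r s t u d e : ℕ → ℂ}

lemma leibnizDefect_one_two (hp : 0 < p) (h : HasDerForm p φ D α β r s t u d e) :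
    leibnizDefect φ D (X p 1) (X p 2) = 0 := by
  simp [leibnizDefect_apply, mu_one_two φ hp, h.apply_one, h.apply_two, mu_self,
    mu_X_one_oddEvenSum]

lemma leibnizDefect_one_odd (h : HasDerForm p φ D α β r s t u d e) {k : ℕ}
    (hk : k ∈ Icc 1 (p - 1)) : leibnizDefect φ D (X p 1) (X p (2 * k + 1)) = 0 := by
  simp [leibnizDefect_apply, mu_one_odd φ hk, h.apply_one, h.apply_odd k hk, mu_self]

lemma leibnizDefect_one_even (h : HasDerForm p φ D α β r s t u d e) {k : ℕ}
    (hk : k ∈ Icc 1 (p - 1)) : leibnizDefect φ D (X p 1) (X p (2 * k + 2)) = 0 := by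
  simp [leibnizDefect_apply, mu_one_even φ hk, h.apply_one, h.apply_even k hk, mu_self]

lemma leibnizDefect_two_odd (hp : 0 < p) (h : HasDerForm p φ D α β r s t u d e) {k : ℕ}
    (hk : k ∈ Icc 1 (p - 1)) : leibnizDefect φ D (X p 2) (X p (2 * k + 1)) = 0 := by
  obtain ⟨hk1, hk2⟩ := mem_Icc.mp hk
  rw [leibnizDefect_apply, mu_two_odd φ hk, mu_apply_X_odd φ hk, h.apply_two, h.apply_odd k hk]
  simp (disch := omega) only [map_add, map_smul, coordL_X_of_ne, coordL_oddEvenSum_of_le_two,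
    coordL_even_oddEvenSum hk, mu_two_one φ hp, mu_two_odd φ hk,
    h.apply_odd k hk]
  linear_combination (norm := module) -(h.one_add_mul_t k hk) • X p 1

lemma leibnizDefect_two_even (hp : 0 < p) (h : HasDerForm p φ D α β r s t u d e) {k : ℕ}
    (hk : k ∈ Icc 1 (p - 1)) : leibnizDefect φ D (X p 2) (X p (2 * k + 2)) = 0 := by
  obtain ⟨hk1, hk2⟩ := mem_Icc.mp hk
  rw [leibnizDefect_apply, mu_two_even φ hk, mu_apply_X_even φ hk, h.apply_two,
    h.apply_even k hk]
  simp (disch := omega) only [map_add, map_smul, coordL_X_of_ne, coordL_oddEvenSum_of_le_two,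
    coordL_odd_oddEvenSum hk, mu_two_one φ hp, mu_two_even φ hk,
    h.apply_even k hk]
  linear_combination (norm := module) (h.mul_u k hk) • X p 1

lemma leibnizDefect_odd_odd (h : HasDerForm p φ D α β r s t u d e) {k l : ℕ}
    (hk : k ∈ Icc 1 (p - 1)) (hl : l ∈ Icc 1 (p - 1)) :
    leibnizDefect φ D (X p (2 * k + 1)) (X p (2 * l + 1)) = 0 := by
  simp [leibnizDefect_apply, h.apply_odd k hk, h.apply_odd l hl, mu_odd_odd φ _ hl,
    mu_one_odd φ hl, mu_swap φ (X p 1) (X p (2 * k + 1)), mu_one_odd φ hk]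

lemma leibnizDefect_even_even (h : HasDerForm p φ D α β r s t u d e) {k l : ℕ}
    (hk : k ∈ Icc 1 (p - 1)) (hl : l ∈ Icc 1 (p - 1)) :
    leibnizDefect φ D (X p (2 * k + 2)) (X p (2 * l + 2)) = 0 := by
  simp [leibnizDefect_apply, h.apply_even k hk, h.apply_even l hl, mu_even_even φ hk hl,
    mu_one_even φ hl, mu_swap φ (X p 1) (X p (2 * k + 2)), mu_one_even φ hk]

lemma leibnizDefect_odd_even (h : HasDerForm p φ D α β r s t u d e) {k l : ℕ}
    (hk : k ∈ Icc 1 (p - 1)) (hl : l ∈ Icc 1 (p - 1)) :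
    leibnizDefect φ D (X p (2 * k + 1)) (X p (2 * l + 2)) = 0 := by
  rw [leibnizDefect_apply, h.apply_odd k hk, h.apply_even l hl]
  simp only [map_add, map_smul, LinearMap.add_apply, LinearMap.smul_apply, mu_odd_even φ hk hl,
    mu_one_even φ hl, mu_swap φ (X p 1) (X p (2 * k + 1)), mu_one_odd φ hk]
  split_ifs with hkl
  · subst hkl
    simp only [map_neg, h.apply_one]
    linear_combination (norm := module) (h.d_add_e k hk) • X p 1
  · simp

theorem mem_derLie_of_hasDerForm (hp : 0 < p) (h : HasDerForm p φ D α β r s t u d e) :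
    D ∈ derLie p φ := by
  have swap {x y : V p} (hxy : leibnizDefect φ D x y = 0) : leibnizDefect φ D y x = 0 := by
    rw [leibnizDefect_swap, hxy, neg_zero]
  apply mem_derLie_of_leibnizDefect_eq_zero
  refine linearMap_ext_X hp ?_ ?_ (fun k hk => ?_) (fun k hk => ?_) <;>
    refine linearMap_ext_X hp ?_ ?_ (fun l hl => ?_) (fun l hl => ?_) <;>
    rw [LinearMap.zero_apply, LinearMap.zero_apply]
  exacts [leibnizDefect_self _, leibnizDefect_one_two hp h, leibnizDefect_one_odd h hl,
    leibnizDefect_one_even h hl,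
    swap (leibnizDefect_one_two hp h), leibnizDefect_self _, leibnizDefect_two_odd hp h hl,
    leibnizDefect_two_even hp h hl,
    swap (leibnizDefect_one_odd h hk), swap (leibnizDefect_two_odd hp h hk),
    leibnizDefect_odd_odd h hk hl, leibnizDefect_odd_even h hk hl,
    swap (leibnizDefect_one_even h hk), swap (leibnizDefect_two_even hp h hk),
    swap (leibnizDefect_odd_even h hl hk), leibnizDefect_even_even h hk hl]

end Leibniz

section ScaleOddEven

variable {p : ℕ}

def projTwo (p : ℕ) : Module.End ℂ (V p) := (coordL p 2).smulRight (X p 2)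

def scaleOddEven (p : ℕ) (a b : ℕ → ℂ) : Module.End ℂ (V p) :=
  1 + ∑ k ∈ Icc 1 (p - 1), ((a k - 1) • (coordL p (2 * k + 1)).smulRight (X p (2 * k + 1))
    + (b k - 1) • (coordL p (2 * k + 2)).smulRight (X p (2 * k + 2)))

variable {a b : ℕ → ℂ}

lemma projTwo_apply (v : V p) : projTwo p v = coordL p 2 v • X p 2 := rfl

lemma scaleOddEven_apply (v : V p) :
    scaleOddEven p a b v = v + oddEvenSum p (fun k => (a k - 1) * coordL p (2 * k + 1) v)
      (fun k => (b k - 1) * coordL p (2 * k + 2) v) := by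
  simp [scaleOddEven, oddEvenSum, mul_smul]

lemma coordL_two_scaleOddEven (v : V p) : coordL p 2 (scaleOddEven p a b v) = coordL p 2 v := by
  rw [scaleOddEven_apply, map_add, coordL_oddEvenSum_of_le_two (by norm_num) le_rfl, add_zero]

lemma scaleOddEven_apply_X_of_le_two {j : ℕ} (hj : j ≤ 2) :
    scaleOddEven p a b (X p j) = X p j := by
  rw [scaleOddEven_apply, oddEvenSum_eq_zero, add_zero] <;>
  · intro k hk
    obtain ⟨hk1, hk2⟩ := mem_Icc.mp hk
    simp (disch := omega) [coordL_X_of_ne]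

lemma scaleOddEven_apply_X_odd {k : ℕ} (hk : k ∈ Icc 1 (p - 1)) :
    scaleOddEven p a b (X p (2 * k + 1)) = a k • X p (2 * k + 1) := by
  obtain ⟨hk1, hk2⟩ := mem_Icc.mp hk
  rw [scaleOddEven_apply, oddEvenSum, sum_eq_single_of_mem k hk fun j hj hjk => ?_]
  · simp (disch := omega) only [coordL_X_self, coordL_X_of_ne]
    module
  · obtain ⟨hj1, hj2⟩ := mem_Icc.mp hj
    simp (disch := omega) [coordL_X_of_ne]

lemma scaleOddEven_apply_X_even {k : ℕ} (hk : k ∈ Icc 1 (p - 1)) :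
    scaleOddEven p a b (X p (2 * k + 2)) = b k • X p (2 * k + 2) := by
  obtain ⟨hk1, hk2⟩ := mem_Icc.mp hk
  rw [scaleOddEven_apply, oddEvenSum, sum_eq_single_of_mem k hk fun j hj hjk => ?_]
  · simp (disch := omega) only [coordL_X_self, coordL_X_of_ne]
    module
  · obtain ⟨hj1, hj2⟩ := mem_Icc.mp hj
    simp (disch := omega) [coordL_X_of_ne]

lemma scaleOddEven_apply_oddEvenSum (f g : ℕ → ℂ) :
    scaleOddEven p a b (oddEvenSum p f g) = oddEvenSum p (a * f) (b * g) := by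
  rw [map_oddEvenSum]
  refine sum_congr rfl fun k hk => ?_
  rw [scaleOddEven_apply_X_odd hk, scaleOddEven_apply_X_even hk, smul_smul, smul_smul,
    Pi.mul_apply, Pi.mul_apply, mul_comm (f k), mul_comm (g k)]

lemma isIdempotentElem_projTwo (hp : 0 < p) : IsIdempotentElem (projTwo p) :=
  LinearMap.ext fun v => by
    simp (disch := omega) [projTwo_apply, coordL_X_self]

lemma projTwo_mul_scaleOddEven : projTwo p * scaleOddEven p a b = projTwo p :=
  LinearMap.ext fun v => by
    rw [Module.End.mul_apply, projTwo_apply, projTwo_apply, coordL_two_scaleOddEven]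

lemma scaleOddEven_mul_scaleOddEven_eq_one (hp : 0 < p) {a' b' : ℕ → ℂ}
    (ha : ∀ k ∈ Icc 1 (p - 1), a' k * a k = 1) (hb : ∀ k ∈ Icc 1 (p - 1), b' k * b k = 1) :
    scaleOddEven p a' b' * scaleOddEven p a b = 1 := by
  refine linearMap_ext_X hp ?_ ?_ (fun k hk => ?_) (fun k hk => ?_)
  · simp [scaleOddEven_apply_X_of_le_two]
  · simp [scaleOddEven_apply_X_of_le_two]
  · rw [Module.End.mul_apply, scaleOddEven_apply_X_odd hk, map_smul, scaleOddEven_apply_X_odd hk,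
      smul_smul, mul_comm (a k), ha k hk, one_smul, Module.End.one_apply]
  · rw [Module.End.mul_apply, scaleOddEven_apply_X_even hk, map_smul,
      scaleOddEven_apply_X_even hk, smul_smul, mul_comm (b k), hb k hk, one_smul,
      Module.End.one_apply]

end ScaleOddEven

section TwistDerivation

variable {p : ℕ} {φ φ' : ℕ → ℂ} {D E Λ : Module.End ℂ (V p)} {a b : ℕ → ℂ}
  {α β α' β' : ℂ} {r s t u d e r' s' t' u' d' e' : ℕ → ℂ}

lemma twist_projTwo_apply_X_of_ne_two {j : ℕ} (h1 : 1 ≤ j) (h2 : j ≤ 2 * p) (hj : j ≠ 2) :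
    twist ℂ Λ (projTwo p) D (X p j) = D (X p j) := by
  simp [twist_apply, Module.End.mul_apply, projTwo_apply,
    coordL_X_of_ne (p := p) j (by omega) (by omega) (Ne.symm hj)]

lemma twist_projTwo_apply_X_two (hp : 0 < p) :
    twist ℂ Λ (projTwo p) D (X p 2) = Λ (D (X p 2)) := by
  simp (disch := omega) [twist_apply, Module.End.mul_apply, projTwo_apply, coordL_X_self]

lemma HasDerForm.projTwo_mul (hp : 0 < p) (h : HasDerForm p φ D α β r s t u d e) :
    projTwo p * D = 0 := by
  refine linearMap_ext_X hp ?_ ?_ (fun k hk => ?_) (fun k hk => ?_)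
  · simp (disch := omega) [projTwo_apply, h.apply_one, coordL_X_of_ne]
  · simp (disch := omega) [projTwo_apply, h.apply_two, coordL_X_of_ne, coordL_oddEvenSum_of_le_two]
  all_goals
    obtain ⟨hk1, hk2⟩ := mem_Icc.mp hk
    simp (disch := omega) [projTwo_apply, h.apply_odd k hk, h.apply_even k hk, coordL_X_of_ne]

lemma HasDerForm.twist_scaleOddEven (hp : 0 < p) (h : HasDerForm p φ D α β r s t u d e)
    (ha : ∀ k ∈ Icc 1 (p - 1), a k * φ k = φ' k)
    (hb : ∀ k ∈ Icc 1 (p - 1), b k * (1 + φ k) = 1 + φ' k) :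
    HasDerForm p φ' (twist ℂ (scaleOddEven p a b) (projTwo p) D) α β (a * r) (b * s) t u d e where
  apply_one := by rw [twist_projTwo_apply_X_of_ne_two le_rfl (by omega) (by omega), h.apply_one]
  apply_two := by
    rw [twist_projTwo_apply_X_two hp, h.apply_two, map_add, map_smul,
      scaleOddEven_apply_X_of_le_two (by norm_num), scaleOddEven_apply_oddEvenSum]
  apply_odd k hk := by
    obtain ⟨hk1, hk2⟩ := mem_Icc.mp hk
    rw [twist_projTwo_apply_X_of_ne_two (by omega) (by omega) (by omega), h.apply_odd k hk]
  apply_even k hk := by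
    obtain ⟨hk1, hk2⟩ := mem_Icc.mp hk
    rw [twist_projTwo_apply_X_of_ne_two (by omega) (by omega) (by omega), h.apply_even k hk]
  one_add_mul_t k hk := by
    rw [Pi.mul_apply, ← hb k hk]
    linear_combination b k * h.one_add_mul_t k hk
  mul_u k hk := by
    rw [Pi.mul_apply, ← ha k hk]
    linear_combination a k * h.mul_u k hk
  d_add_e := h.d_add_e

lemma HasDerForm.lie_scaleOddEven_apply (h : HasDerForm p φ D α β r s t u d e)
    (c : ℂ) (f g : ℕ → ℂ) :
    ⁅D, scaleOddEven p a b⁆ (c • X p 1 + oddEvenSum p f g) =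
      (∑ k ∈ Icc 1 (p - 1), ((a k - 1) * t k * f k + (b k - 1) * u k * g k)) • X p 1 := by
  have h1 : ⁅D, scaleOddEven p a b⁆ (X p 1) = 0 := by
    simp [Ring.lie_def, Module.End.mul_apply, scaleOddEven_apply_X_of_le_two, h.apply_one]
  have hodd : ∀ k ∈ Icc 1 (p - 1),
      ⁅D, scaleOddEven p a b⁆ (X p (2 * k + 1)) = ((a k - 1) * t k) • X p 1 := fun k hk => by
    simp only [Ring.lie_def, LinearMap.sub_apply, Module.End.mul_apply,
      scaleOddEven_apply_X_odd hk, map_smul, h.apply_odd k hk, map_add,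
      scaleOddEven_apply_X_of_le_two (show 1 ≤ 2 by norm_num)]
    module
  have heven : ∀ k ∈ Icc 1 (p - 1),
      ⁅D, scaleOddEven p a b⁆ (X p (2 * k + 2)) = ((b k - 1) * u k) • X p 1 := fun k hk => by
    simp only [Ring.lie_def, LinearMap.sub_apply, Module.End.mul_apply,
      scaleOddEven_apply_X_even hk, map_smul, h.apply_even k hk, map_add,
      scaleOddEven_apply_X_of_le_two (show 1 ≤ 2 by norm_num)]
    module
  rw [map_add, map_smul, h1, smul_zero, zero_add, map_oddEvenSum, sum_smul]
  refine sum_congr rfl fun k hk => ?_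
  rw [hodd k hk, heven k hk]
  module

lemma HasDerForm.lie_scaleOddEven_mul_mul_projTwo (hp : 0 < p)
    (hD : HasDerForm p φ D α β r s t u d e) (hE : HasDerForm p φ E α' β' r' s' t' u' d' e')
    (hab : ∀ k ∈ Icc 1 (p - 1), φ k * (a k - 1) = (1 + φ k) * (b k - 1)) :
    ⁅D, scaleOddEven p a b⁆ * E * projTwo p = ⁅E, scaleOddEven p a b⁆ * D * projTwo p := by
  refine linearMap_ext_X hp ?_ ?_ (fun k hk => ?_) (fun k hk => ?_)
  · simp (disch := omega) [Module.End.mul_apply, projTwo_apply, coordL_X_of_ne]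
  · simp (disch := omega) only [Module.End.mul_apply, projTwo_apply, coordL_X_self, one_smul,
      hD.apply_two, hE.apply_two, hD.lie_scaleOddEven_apply, hE.lie_scaleOddEven_apply]
    refine congrArg (· • X p 1) (sum_congr rfl fun k hk => ?_)
    -- with `c` the common value in `hab`, both sides are `-c * (t k * u' k + u k * t' k)`
    linear_combination (a k - 1) * t k * hE.mul_u k hk + (b k - 1) * u k * hE.one_add_mul_t k hk
      - (a k - 1) * t' k * hD.mul_u k hk - (b k - 1) * u' k * hD.one_add_mul_t k hk
      + (t' k * u k - t k * u' k) * hab k hk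
  all_goals
    obtain ⟨hk1, hk2⟩ := mem_Icc.mp hk
    simp (disch := omega) [Module.End.mul_apply, projTwo_apply, coordL_X_of_ne]

end TwistDerivation

section Isomorphism

variable {p : ℕ} {φ φ' : ℕ → ℂ} {D E : Module.End ℂ (V p)}

def rescale (p : ℕ) (φ φ' : ℕ → ℂ) : Module.End ℂ (V p) :=
  scaleOddEven p (fun k => φ' k / φ k) (fun k => (1 + φ' k) / (1 + φ k))

lemma rescale_mul_rescale (hp : 0 < p) (hΩ : AvoidsOmega1 p φ) (hΩ' : AvoidsOmega1 p φ') :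
    rescale p φ' φ * rescale p φ φ' = 1 := by
  refine scaleOddEven_mul_scaleOddEven_eq_one hp (fun k hk => ?_) (fun k hk => ?_)
  · field_simp [hΩ.ne_zero hk, hΩ'.ne_zero hk]
  · field_simp [hΩ.one_add_ne_zero hk, hΩ'.one_add_ne_zero hk]

theorem twist_rescale_mem_derLie (hp : 0 < p) (hΩ : AvoidsOmega1 p φ) (hD : D ∈ derLie p φ) :
    twist ℂ (rescale p φ φ') (projTwo p) D ∈ derLie p φ' := by
  obtain ⟨α, β, r, s, t, u, d, e, h⟩ := hasDerForm_of_mem_derLie hp hΩ hD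
  exact mem_derLie_of_hasDerForm hp (h.twist_scaleOddEven hp
    (fun k hk => div_mul_cancel₀ _ (hΩ.ne_zero hk))
    (fun k hk => div_mul_cancel₀ _ (hΩ.one_add_ne_zero hk)))

theorem twist_rescale_lie (hp : 0 < p) (hΩ : AvoidsOmega1 p φ) (hD : D ∈ derLie p φ)
    (hE : E ∈ derLie p φ) :
    twist ℂ (rescale p φ φ') (projTwo p) ⁅D, E⁆ =
      ⁅twist ℂ (rescale p φ φ') (projTwo p) D, twist ℂ (rescale p φ φ') (projTwo p) E⁆ := by
  obtain ⟨α, β, r, s, t, u, d, e, hD⟩ := hasDerForm_of_mem_derLie hp hΩ hD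
  obtain ⟨α', β', r', s', t', u', d', e', hE⟩ := hasDerForm_of_mem_derLie hp hΩ hE
  refine twist_lie projTwo_mul_scaleOddEven (hD.projTwo_mul hp) (hE.projTwo_mul hp)
    (hD.lie_scaleOddEven_mul_mul_projTwo hp hE fun k hk => ?_)
  rw [mul_sub, mul_div_cancel₀ _ (hΩ.ne_zero hk), mul_sub,
    mul_div_cancel₀ _ (hΩ.one_add_ne_zero hk)]
  ring

end Isomorphism

/-- if `φ` and `φ'` both avoid `Ω₁`, then `Der(F_φ) ≅ Der(F_{φ'})`
as complex Lie algebras. -/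
theorem stmt9 (p : ℕ) (hp : 2 ≤ p) (φ φ' : ℕ → ℂ)
    (hΩ : AvoidsOmega1 p φ) (hΩ' : AvoidsOmega1 p φ') :
    Nonempty (↥(derLie p φ) ≃ₗ⁅ℂ⁆ ↥(derLie p φ')) := by
  have hp₀ : 0 < p := by omega
  have hP := isIdempotentElem_projTwo hp₀
  exact ⟨LieSubalgebra.equivOfLinearMap _ _ (twist ℂ (rescale p φ φ') (projTwo p))
    (twist ℂ (rescale p φ' φ) (projTwo p))
    (fun _ hD => twist_rescale_mem_derLie hp₀ hΩ hD)
    (fun _ hD => twist_rescale_mem_derLie hp₀ hΩ' hD)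
    (fun D _ => twist_twist hP (rescale_mul_rescale hp₀ hΩ hΩ') D)
    (fun D _ => twist_twist hP (rescale_mul_rescale hp₀ hΩ' hΩ) D)
    (fun _ hD _ hE => twist_rescale_lie hp₀ hΩ hD hE)⟩
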